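/- For every ε > 0 there exists ε' > 0 such that for every prime p and every nonempty finite subset H of F_p, if max_{a ∈ ℤ, p ∤ a} |∑_{h∈H} e_p(a h)| < ε'·|H|, then H is ε-equidistributed modulo p, i.e. for every interval J of F_p one has | |H ∩ J|/|H| − |J|/p | < ε. -/

import Mathlib

open Finset

/-- `e_p(x) = exp(2πi x / p)` for `x ∈ F_p`. -/
noncomputable def ep (p : ℕ) (x : ZMod p) : ℂ :=
  Complex.exp (2 * Real.pi * Complex.I * (x.val : ℂ) / (p : ℂ))

/-- An interval in `F_p`: a set of the form `{a x + b : 0 ≤ x ≤ |J| - 1}` with `a ≠ 0`. -/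
def IsInterval (p : ℕ) (J : Finset (ZMod p)) : Prop :=
  ∃ a b : ZMod p, a ≠ 0 ∧
    J = (Finset.range J.card).image (fun n : ℕ => a * (n : ZMod p) + b)

/-
Smooth the indicator of the interval `J = {a k + b}` by a short progression `U = {a u : 0 ≤ u ≤ r}`
with `r ≈ √ε' p`. The number `N` of triples `(h, u, v) ∈ H × U × U` with `h + u - v ∈ A` satisfies
`p N = ∑ₐ S_H(a) |S_U(a)|² conj S_A(a)`, where `S_X(a) = ∑_{x ∈ X} e_p(a x)`. The term `a = 0` is
`|H| |U|² |A|`; by the hypothesis and Parseval, `∑ₐ |S_U(a)|² = p |U|`, the others add up to at most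
`ε' |H| |A| p |U|`. Sandwiching `|H ∩ J| |U|²` between these counts for the progressions `A` obtained
by lengthening and shortening `J` by `r` steps at both ends gives
`| |H ∩ J| / |H| - |J| / p | ≤ 2 r / p + ε' p / (r + 1) ≤ 3 √ε'`.
-/

open ComplexConjugate

section SmoothedCount

variable {G : Type*} [AddCommGroup G] [DecidableEq G]

def smoothedCount (H U A : Finset G) : ℕ := ∑ h ∈ H, #{uv ∈ U ×ˢ U | h + uv.1 - uv.2 ∈ A}

lemma card_inter_mul_sq_le_smoothedCount {H I U A : Finset G}
    (hIA : ∀ x ∈ I, ∀ u ∈ U, ∀ v ∈ U, x + u - v ∈ A) :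
    #(H ∩ I) * (#U) ^ 2 ≤ smoothedCount H U A := by
  calc #(H ∩ I) * (#U) ^ 2 = ∑ _h ∈ H ∩ I, #(U ×ˢ U) := by
        rw [sum_const, card_product, smul_eq_mul, sq]
    _ = ∑ h ∈ H ∩ I, #{uv ∈ U ×ˢ U | h + uv.1 - uv.2 ∈ A} := sum_congr rfl fun h hh => by
        rw [filter_true_of_mem fun uv huv =>
          hIA h (mem_inter.1 hh).2 _ (mem_product.1 huv).1 _ (mem_product.1 huv).2]
    _ ≤ smoothedCount H U A := sum_le_sum_of_subset inter_subset_left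

lemma smoothedCount_le_card_inter_mul_sq {H I U A : Finset G}
    (hAI : ∀ x, ∀ u ∈ U, ∀ v ∈ U, x + u - v ∈ A → x ∈ I) :
    smoothedCount H U A ≤ #(H ∩ I) * (#U) ^ 2 := by
  calc smoothedCount H U A = ∑ h ∈ H ∩ I, #{uv ∈ U ×ˢ U | h + uv.1 - uv.2 ∈ A} := by
        refine (sum_subset inter_subset_left fun h hH hHI => ?_).symm
        refine card_eq_zero.2 (filter_eq_empty_iff.2 fun uv huv hA => hHI ?_)
        exact mem_inter.2 ⟨hH, hAI h _ (mem_product.1 huv).1 _ (mem_product.1 huv).2 hA⟩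
    _ ≤ ∑ _h ∈ H ∩ I, #(U ×ˢ U) := sum_le_sum fun _ _ => card_filter_le _ _
    _ = #(H ∩ I) * (#U) ^ 2 := by rw [sum_const, card_product, smul_eq_mul, sq]

end SmoothedCount

section Fourier

variable {R : Type*} [CommRing R] (ψ : AddChar R ℂ)

def expSum (X : Finset R) (a : R) : ℂ := ∑ x ∈ X, ψ (a * x)

@[simp]
lemma expSum_zero (X : Finset R) : expSum ψ X 0 = #X := by
  simp [expSum]

variable [Fintype R]

lemma norm_expSum_le (X : Finset R) (a : R) : ‖expSum ψ X a‖ ≤ #X :=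
  (norm_sum_le _ _).trans (by simp)

variable [DecidableEq R] {ψ}

lemma sum_expSum_mul_conj (hψ : ψ.IsPrimitive) (X Y : Finset R) :
    ∑ a, expSum ψ X a * conj (expSum ψ Y a) = Fintype.card R * #(X ∩ Y) := by
  calc ∑ a, expSum ψ X a * conj (expSum ψ Y a)
      = ∑ x ∈ X, ∑ y ∈ Y, ∑ a, ψ (a * (x - y)) := by
        simp only [expSum, map_sum, sum_mul_sum, ← AddChar.map_neg_eq_conj,
          ← AddChar.map_add_eq_mul, ← mul_neg, ← mul_add, ← sub_eq_add_neg]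
        rw [sum_comm]
        exact sum_congr rfl fun x _ => sum_comm
    _ = Fintype.card R * #(X ∩ Y) := by
        simp [AddChar.sum_mulShift _ hψ, sub_eq_zero, sum_ite_mem, mul_comm]

lemma sum_norm_expSum_sq (hψ : ψ.IsPrimitive) (X : Finset R) :
    ∑ a, ‖expSum ψ X a‖ ^ 2 = Fintype.card R * #X := by
  have h := sum_expSum_mul_conj hψ X X
  simp only [Complex.mul_conj', inter_self] at h
  exact_mod_cast h

lemma card_mul_ite_mem (hψ : ψ.IsPrimitive) (A : Finset R) (z : R) :
    (Fintype.card R : ℂ) * (if z ∈ A then 1 else 0) = ∑ a, ψ (a * z) * conj (expSum ψ A a) := by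
  have h := sum_expSum_mul_conj hψ {z} A
  simp only [expSum, sum_singleton] at h ⊢
  rw [h]
  split_ifs with hz
  · simp [singleton_inter_of_mem hz]
  · simp [singleton_inter_of_notMem hz]

lemma card_mul_smoothedCount (hψ : ψ.IsPrimitive) (H U A : Finset R) :
    (Fintype.card R : ℂ) * smoothedCount H U A
      = ∑ a, expSum ψ H a * (‖expSum ψ U a‖ : ℂ) ^ 2 * conj (expSum ψ A a) := by
  simp only [smoothedCount, card_filter, Nat.cast_sum, Nat.cast_ite, Nat.cast_one, Nat.cast_zero,
    mul_sum, card_mul_ite_mem hψ]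
  rw [sum_congr rfl fun h _ => sum_comm, sum_comm]
  refine sum_congr rfl fun a _ => ?_
  simp only [← Complex.mul_conj', ← sum_mul]
  congr 1
  rw [expSum, sum_mul]
  refine sum_congr rfl fun h _ => ?_
  rw [expSum, map_sum, sum_mul_sum, ← sum_product', mul_sum]
  refine sum_congr rfl fun uv _ => ?_
  rw [← AddChar.map_neg_eq_conj, ← AddChar.map_add_eq_mul, ← AddChar.map_add_eq_mul]
  ring_nf

lemma abs_card_mul_smoothedCount_sub_le (hψ : ψ.IsPrimitive) {H : Finset R} {δ : ℝ} (hδ : 0 ≤ δ)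
    (hH : ∀ a ≠ 0, ‖expSum ψ H a‖ ≤ δ * #H) (U A : Finset R) :
    |Fintype.card R * (smoothedCount H U A : ℝ) - #H * (#U) ^ 2 * #A|
      ≤ δ * #H * #A * (Fintype.card R * #U) := by
  set F : R → ℂ := fun a => expSum ψ H a * (‖expSum ψ U a‖ : ℂ) ^ 2 * conj (expSum ψ A a)
  have hsplit : ((Fintype.card R * (smoothedCount H U A : ℝ) - #H * (#U) ^ 2 * #A : ℝ) : ℂ)
      = ∑ a ∈ univ.erase 0, F a := by
    push_cast
    rw [card_mul_smoothedCount hψ, ← add_sum_erase _ _ (mem_univ 0)]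
    simp [F]
  have hFa : ∀ a ∈ univ.erase (0 : R), ‖F a‖ ≤ δ * #H * #A * ‖expSum ψ U a‖ ^ 2 := by
    intro a ha
    calc ‖F a‖ = ‖expSum ψ H a‖ * ‖expSum ψ U a‖ ^ 2 * ‖expSum ψ A a‖ := by
          simp [F]
      _ ≤ δ * #H * ‖expSum ψ U a‖ ^ 2 * #A := by
          gcongr
          exacts [hH a (ne_of_mem_erase ha), norm_expSum_le ψ A a]
      _ = δ * #H * #A * ‖expSum ψ U a‖ ^ 2 := by ring
  rw [← Real.norm_eq_abs, ← Complex.norm_real, hsplit]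
  calc ‖∑ a ∈ univ.erase 0, F a‖ ≤ ∑ a ∈ univ.erase 0, δ * #H * #A * ‖expSum ψ U a‖ ^ 2 :=
        norm_sum_le_of_le _ hFa
    _ ≤ ∑ a, δ * #H * #A * ‖expSum ψ U a‖ ^ 2 :=
        sum_le_sum_of_subset_of_nonneg (subset_univ _) fun _ _ _ => by positivity
    _ = δ * #H * #A * (Fintype.card R * #U) := by rw [← mul_sum, sum_norm_expSum_sq hψ]

lemma abs_smoothedCount_div_sub_le (hψ : ψ.IsPrimitive) {H U : Finset R} {δ : ℝ} (hδ : 0 ≤ δ)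
    (hH : ∀ a ≠ 0, ‖expSum ψ H a‖ ≤ δ * #H) (hU : U.Nonempty) (A : Finset R) :
    |(smoothedCount H U A : ℝ) / (#U) ^ 2 - #H * #A / Fintype.card R|
      ≤ δ * #H * Fintype.card R / #U := by
  have hA : (#A : ℝ) ≤ Fintype.card R := by exact_mod_cast card_le_univ A
  rw [show (smoothedCount H U A : ℝ) / (#U) ^ 2 - #H * #A / Fintype.card R
      = (Fintype.card R * smoothedCount H U A - #H * (#U) ^ 2 * #A) / (Fintype.card R * (#U) ^ 2)
      by field_simp, abs_div, abs_of_pos (by positivity : (0 : ℝ) < Fintype.card R * (#U) ^ 2),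
    div_le_iff₀ (by positivity)]
  calc _ ≤ δ * #H * #A * (Fintype.card R * #U) := abs_card_mul_smoothedCount_sub_le hψ hδ hH U A
    _ ≤ δ * #H * Fintype.card R * (Fintype.card R * #U) := by gcongr
    _ = δ * #H * Fintype.card R / #U * (Fintype.card R * (#U) ^ 2) := by field_simp

end Fourier

section Progression

variable {R : Type*} [CommRing R] [DecidableEq R]

noncomputable def progression (a b : R) (m : ℤ) (L : ℕ) : Finset R :=
  (Ico m (m + L)).image fun k : ℤ => a * k + b

lemma mem_progression {a b x : R} {m : ℤ} {L : ℕ} :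
    x ∈ progression a b m L ↔ ∃ k : ℤ, (m ≤ k ∧ k < m + L) ∧ a * k + b = x := by
  simp [progression]

lemma card_progression_le (a b : R) (m : ℤ) (L : ℕ) : #(progression a b m L) ≤ L :=
  card_image_le.trans (by simp)

lemma image_range_eq_progression (a b : R) (L : ℕ) :
    (range L).image (fun n : ℕ => a * n + b) = progression a b 0 L := by
  ext x
  simp only [mem_image, mem_range, mem_progression]
  constructor
  · rintro ⟨n, hn, rfl⟩
    exact ⟨n, by omega, by simp⟩
  · rintro ⟨k, hk, rfl⟩
    exact ⟨k.toNat, by omega, by rw [← Int.cast_natCast, Int.toNat_of_nonneg hk.1]⟩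

variable {a b x u v : R} {m : ℤ} {L r : ℕ}

lemma add_sub_mem_progression (hx : x ∈ progression a b m L)
    (hu : u ∈ progression a 0 0 (r + 1)) (hv : v ∈ progression a 0 0 (r + 1)) :
    x + u - v ∈ progression a b (m - r) (L + 2 * r) := by
  obtain ⟨k, hk, rfl⟩ := mem_progression.1 hx
  obtain ⟨i, hi, rfl⟩ := mem_progression.1 hu
  obtain ⟨j, hj, rfl⟩ := mem_progression.1 hv
  refine mem_progression.2 ⟨k + i - j, by push_cast at hk hi hj ⊢; omega, by push_cast; ring⟩

lemma mem_progression_of_add_sub_mem (hu : u ∈ progression a 0 0 (r + 1))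
    (hv : v ∈ progression a 0 0 (r + 1)) (h : x + u - v ∈ progression a b (m + r) (L - 2 * r)) :
    x ∈ progression a b m L := by
  obtain ⟨k, hk, hkx⟩ := mem_progression.1 h
  obtain ⟨i, hi, rfl⟩ := mem_progression.1 hu
  obtain ⟨j, hj, rfl⟩ := mem_progression.1 hv
  refine mem_progression.2 ⟨k - i + j, by push_cast at hk hi hj; omega, ?_⟩
  push_cast
  linear_combination hkx

end Progression

lemma card_progression {p : ℕ} [Fact p.Prime] {a : ZMod p} (ha : a ≠ 0) (b : ZMod p) (m : ℤ)
    {L : ℕ} (hL : L ≤ p) : #(progression a b m L) = L := by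
  rw [progression, card_image_of_injOn, Int.card_Ico, add_sub_cancel_left, Int.toNat_natCast]
  intro k hk l hl hkl
  have hdvd : (p : ℤ) ∣ l - k := by
    rw [← ZMod.intCast_eq_intCast_iff_dvd_sub]
    exact mul_left_cancel₀ ha (add_right_cancel hkl)
  simp only [coe_Ico, Set.mem_Ico] at hk hl
  have := Int.eq_zero_of_abs_lt_dvd hdvd (by rw [abs_lt]; omega)
  omega

lemma ep_eq_stdAddChar {p : ℕ} [NeZero p] (x : ZMod p) : ep p x = ZMod.stdAddChar x := by
  rw [ep, ZMod.stdAddChar_apply, ZMod.toCircle_apply]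

section ZModPrime

variable {p : ℕ} [Fact p.Prime] {H : Finset (ZMod p)} {δ : ℝ} {a : ZMod p}

lemma card_inter_progression_le (hδ : 0 ≤ δ)
    (hH : ∀ a ≠ 0, ‖expSum ZMod.stdAddChar H a‖ ≤ δ * #H) (ha : a ≠ 0) (b : ZMod p) (m : ℤ)
    (L : ℕ) {r : ℕ} (hr : r < p) :
    (#(H ∩ progression a b m L) : ℝ) ≤ #H * (L + 2 * r) / p + δ * #H * p / (r + 1) := by
  set U := progression a 0 0 (r + 1)
  set A := progression a b (m - r) (L + 2 * r)
  have hU : #U = r + 1 := card_progression ha 0 0 hr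
  have hsand : #(H ∩ progression a b m L) * (#U) ^ 2 ≤ smoothedCount H U A :=
    card_inter_mul_sq_le_smoothedCount fun x hx u hu v hv => add_sub_mem_progression hx hu hv
  have hcount := abs_smoothedCount_div_sub_le (ZMod.isPrimitive_stdAddChar p) hδ hH
    (U := U) (card_pos.1 (by omega)) A
  have hA : (#A : ℝ) ≤ L + 2 * r := by exact_mod_cast card_progression_le a b (m - r) (L + 2 * r)
  rw [ZMod.card, hU] at hcount
  rw [hU] at hsand
  calc (#(H ∩ progression a b m L) : ℝ) ≤ smoothedCount H U A / ((r + 1 : ℕ) : ℝ) ^ 2 := by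
        rw [le_div_iff₀ (by positivity)]
        exact_mod_cast hsand
    _ ≤ #H * #A / p + δ * #H * p / (r + 1) := by
        push_cast at hcount ⊢
        linarith [(abs_le.1 hcount).2]
    _ ≤ #H * (L + 2 * r) / p + δ * #H * p / (r + 1) := by gcongr

lemma le_card_inter_progression (hδ : 0 ≤ δ)
    (hH : ∀ a ≠ 0, ‖expSum ZMod.stdAddChar H a‖ ≤ δ * #H) (ha : a ≠ 0) (b : ZMod p) (m : ℤ)
    {L r : ℕ} (hL : L ≤ p) (hr : r < p) :
    #H * (L - 2 * r) / p - δ * #H * p / (r + 1) ≤ (#(H ∩ progression a b m L) : ℝ) := by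
  set U := progression a 0 0 (r + 1)
  set A := progression a b (m + r) (L - 2 * r)
  have hU : #U = r + 1 := card_progression ha 0 0 hr
  have hsand : smoothedCount H U A ≤ #(H ∩ progression a b m L) * (#U) ^ 2 :=
    smoothedCount_le_card_inter_mul_sq fun x u hu v hv hA => mem_progression_of_add_sub_mem hu hv hA
  have hcount := abs_smoothedCount_div_sub_le (ZMod.isPrimitive_stdAddChar p) hδ hH
    (U := U) (card_pos.1 (by omega)) A
  have hA : (L : ℝ) - 2 * r ≤ #A := by
    rw [card_progression ha b (m + r) (by omega), sub_le_iff_le_add]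
    exact_mod_cast le_tsub_add
  rw [ZMod.card, hU] at hcount
  rw [hU] at hsand
  calc #H * (L - 2 * r) / p - δ * #H * p / (r + 1) ≤ #H * #A / p - δ * #H * p / (r + 1) := by
        gcongr
    _ ≤ smoothedCount H U A / ((r + 1 : ℕ) : ℝ) ^ 2 := by
        push_cast at hcount ⊢
        linarith [(abs_le.1 hcount).1]
    _ ≤ #(H ∩ progression a b m L) := by
        rw [div_le_iff₀ (by positivity)]
        exact_mod_cast hsand

lemma abs_card_inter_progression_div_sub_le (hH₀ : H.Nonempty) (hδ : 0 ≤ δ)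
    (hH : ∀ a ≠ 0, ‖expSum ZMod.stdAddChar H a‖ ≤ δ * #H) (ha : a ≠ 0) (b : ZMod p) (m : ℤ)
    {L r : ℕ} (hL : L ≤ p) (hr : r < p) :
    |(#(H ∩ progression a b m L) : ℝ) / #H - L / p| ≤ 2 * r / p + δ * p / (r + 1) := by
  have hH' : (0 : ℝ) < #H := by exact_mod_cast hH₀.card_pos
  have hup := card_inter_progression_le hδ hH ha b m L hr
  have hlo := le_card_inter_progression hδ hH ha b m hL hr
  rw [show (#(H ∩ progression a b m L) : ℝ) / #H - L / p
      = (#(H ∩ progression a b m L) - #H * L / p) / #H by field_simp,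
    abs_div, abs_of_pos hH', div_le_iff₀ hH', abs_le]
  ring_nf at hup hlo ⊢
  constructor <;> linarith

lemma abs_card_inter_progression_div_sub_le_three_mul {η : ℝ} (hη : 0 < η) (hη₁ : η < 1)
    (hH₀ : H.Nonempty) (hH : ∀ a ≠ 0, ‖expSum ZMod.stdAddChar H a‖ ≤ η ^ 2 * #H) (ha : a ≠ 0)
    (b : ZMod p) (m : ℤ) {L : ℕ} (hL : L ≤ p) :
    |(#(H ∩ progression a b m L) : ℝ) / #H - L / p| ≤ 3 * η := by
  have hp : (0 : ℝ) < p := by exact_mod_cast (Fact.out : p.Prime).pos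
  set r := ⌊η * p⌋₊
  have hr : (r : ℝ) ≤ η * p := Nat.floor_le (by positivity)
  have hr' : η * p < r + 1 := Nat.lt_floor_add_one _
  have hrp : r < p := by
    have : (r : ℝ) < p := hr.trans_lt (by nlinarith)
    exact_mod_cast this
  calc _ ≤ 2 * r / p + η ^ 2 * p / (r + 1) :=
        abs_card_inter_progression_div_sub_le hH₀ (by positivity) hH ha b m hL hrp
    _ ≤ 2 * η + η := by
        gcongr
        · rw [div_le_iff₀ hp]; linarith
        · rw [div_le_iff₀ (by positivity)]; nlinarith
    _ = 3 * η := by ring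

end ZModPrime

theorem weyl_criterion_equidistribution (ε : ℝ) (hε : 0 < ε) :
    ∃ ε' : ℝ, 0 < ε' ∧ ∀ p : ℕ, p.Prime →
      ∀ H : Finset (ZMod p), H.Nonempty →
        (∀ a : ℤ, ¬ ((p : ℤ) ∣ a) →
          ‖∑ h ∈ H, ep p ((a : ZMod p) * h)‖ < ε' * H.card) →
        ∀ J : Finset (ZMod p), IsInterval p J →
          |((H ∩ J).card : ℝ) / H.card - (J.card : ℝ) / p| < ε := by
  set η := min ε 1 / 4 with hη_def
  have hη : 0 < η := by positivity
  refine ⟨η ^ 2, by positivity, fun p hp H hH hyp J hJ => ?_⟩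
  have := Fact.mk hp
  obtain ⟨a, b, ha, hJ⟩ := hJ
  have hF : ∀ α ≠ 0, ‖expSum ZMod.stdAddChar H α‖ ≤ η ^ 2 * #H := by
    intro α hα
    obtain ⟨k, rfl⟩ := ZMod.intCast_surjective α
    simp only [expSum, ← ep_eq_stdAddChar]
    exact (hyp k (by rwa [← ZMod.intCast_zmod_eq_zero_iff_dvd])).le
  have hest := abs_card_inter_progression_div_sub_le_three_mul hη
    (by linarith [min_le_right ε 1, hη_def]) hH hF ha b 0 ((card_le_univ J).trans_eq (ZMod.card p))
  rw [← image_range_eq_progression, ← hJ] at hest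
  exact hest.trans_lt (by linarith [min_le_left ε 1, hη_def])
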